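/- For a probability distribution g on Fin K and positive p : Fin K → ℝ, equality ln(∑_k p(k)) = ∑_k g(k) ln(p(k)/g(k)) holds if and only if g(k) = p(k)/∑_j p(j) for all k. -/
import Mathlib


open Real Finset

/-- Equality case of the Jensen/ELBO bound: equality holds iff `g` is the
posterior distribution proportional to `p`. -/
theorem jensen_log_eq_iff (K : ℕ) (hK : 0 < K) (g p : Fin K → ℝ)
    (hg : ∀ k, 0 ≤ g k) (hgsum : ∑ k, g k = 1) (hp : ∀ k, 0 < p k) :
    Real.log (∑ k, p k) = ∑ k, g k * Real.log (p k / g k) ↔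
      ∀ k, g k = p k / ∑ j, p j := by
  have hS : 0 < ∑ j, p j :=
    Finset.sum_pos (fun k _ => hp k) ⟨⟨0, hK⟩, Finset.mem_univ _⟩
  set S := ∑ j, p j with hSdef
  have key : ∀ k, g k * Real.log (p k / g k) ≤ g k * Real.log S + (p k / S - g k) ∧
      (g k ≠ p k / S → g k * Real.log (p k / g k) < g k * Real.log S + (p k / S - g k)) := by
    intro k
    rcases eq_or_lt_of_le (hg k) with h0 | h0
    · have hpk := hp k
      have h1 : 0 < p k / S := by positivity
      constructor
      · rw [← h0]; simpa using h1.le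
      · intro _; rw [← h0]; simpa using h1
    · have hpk := hp k
      have hratio : 0 < p k / (g k * S) := by positivity
      have hlog : Real.log (p k / g k) = Real.log S + Real.log (p k / (g k * S)) := by
        rw [← Real.log_mul hS.ne' hratio.ne']
        congr 1
        field_simp
      have hmul : g k * (p k / (g k * S) - 1) = p k / S - g k := by
        field_simp
      have hiff : p k / (g k * S) = 1 ↔ g k = p k / S := by
        rw [div_eq_one_iff_eq (by positivity), eq_div_iff hS.ne']
        constructor <;> intro h <;> linarith [h]
      constructor
      · have := Real.log_le_sub_one_of_pos hratio
        nlinarith [mul_le_mul_of_nonneg_left this h0.le]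
      · intro hne
        have hne1 : p k / (g k * S) ≠ 1 := fun h => hne (hiff.mp h)
        have := Real.log_lt_sub_one_of_pos hratio hne1
        nlinarith [mul_lt_mul_of_pos_left this h0]
  have hsumRHS : ∑ k, (g k * Real.log S + (p k / S - g k)) = Real.log S := by
    rw [Finset.sum_add_distrib, Finset.sum_sub_distrib, ← Finset.sum_mul, hgsum,
      ← Finset.sum_div, ← hSdef, div_self hS.ne']
    ring
  constructor
  · intro heq
    intro k
    by_contra hne
    have hlt : ∑ i, g i * Real.log (p i / g i) <
        ∑ i, (g i * Real.log S + (p i / S - g i)) :=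
      Finset.sum_lt_sum (fun i _ => (key i).1) ⟨k, Finset.mem_univ k, (key k).2 hne⟩
    rw [hsumRHS] at hlt
    linarith [heq]
  · intro h
    have : ∀ k, g k * Real.log (p k / g k) = (p k / S) * Real.log S := by
      intro k
      rw [h k]
      congr 2
      rw [div_div_eq_mul_div, mul_comm, mul_div_assoc, div_self (hp k).ne', mul_one]
    rw [Finset.sum_congr rfl (fun k _ => this k), ← Finset.sum_mul, ← Finset.sum_div,
      ← hSdef, div_self hS.ne', one_mul]
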